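/- arXiv:1606.02026 — 2 statements merged into one kernel-verified Lean document; each statement's English description precedes it below -/
import Mathlib

section
/- Let α and d be real numbers with 0 < α < π and d ≥ 0, and let θ be any real number. Then in ℝ² the phasor sum for the odd topology, P(θ) = (d/(2 sin α)) • (1, 0) + (d/(2 sin α)) • (cos 2θ, sin 2θ) + (1/sin(α/2)) • (cos θ, sin θ), satisfies P(θ) = (1/sin(α/2) + (d/sin α) · cos θ) • (cos θ, sin θ). Consequently, in polar coordinates with pole at the origin, the locus of points P(θ) is given by the limaçon r(θ) = csc(α/2) + d csc(α) cos(θ). -/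
open Real

def pt (a b : ℝ) : EuclideanSpace ℝ (Fin 2) := WithLp.toLp 2 ![a, b]

theorem pt_add (a b a' b' : ℝ) : pt a b + pt a' b' = pt (a + a') (b + b') := by
  ext i
  fin_cases i <;> simp [pt]

theorem smul_pt (c a b : ℝ) : c • pt a b = pt (c * a) (c * b) := by
  ext i
  fin_cases i <;> simp [pt]

/-- The double-angle formulas: the rotating phasor `v₂(θ)` plus its starting position `(1, 0)`
lies on the ray of `v₃(θ)`, which is why the Steiner point moves along that ray. -/
theorem pt_one_zero_add_pt_cos_sin_two_mul (θ : ℝ) :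
    pt 1 0 + pt (cos (2 * θ)) (sin (2 * θ)) = (2 * cos θ) • pt (cos θ) (sin θ) := by
  rw [pt_add, smul_pt, cos_two_mul, sin_two_mul]
  congr 1 <;> ring

theorem limacon_odd_topology_general
    (α d θ : ℝ) :
    (d / (2 * Real.sin α)) • pt 1 0 +
      (d / (2 * Real.sin α)) • pt (Real.cos (2 * θ)) (Real.sin (2 * θ)) +
      (1 / Real.sin (α / 2)) • pt (Real.cos θ) (Real.sin θ) =
    (1 / Real.sin (α / 2) + (d / Real.sin α) * Real.cos θ) •
      pt (Real.cos θ) (Real.sin θ) := by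
  rw [← smul_add, pt_one_zero_add_pt_cos_sin_two_mul, smul_smul, ← add_smul]
  congr 1
  field_simp
  ring

/-- **The limaçon of Steiner points, odd topology.**
The phasor sum `P(θ) = (d/(2 sin α)) • (1,0) + (d/(2 sin α)) • (cos 2θ, sin 2θ)
+ (1/sin(α/2)) • (cos θ, sin θ)` equals
`(1/sin(α/2) + (d/sin α)·cos θ) • (cos θ, sin θ)`; hence in polar coordinates the locus of
potential Steiner points is the limaçon `r(θ) = csc(α/2) + d csc(α) cos θ`. -/
theorem limacon_odd_topology
    (α d θ : ℝ) (hα₀ : 0 < α) (hα₁ : α < π) (hd : 0 ≤ d) :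
    (d / (2 * Real.sin α)) • pt 1 0 +
      (d / (2 * Real.sin α)) • pt (Real.cos (2 * θ)) (Real.sin (2 * θ)) +
      (1 / Real.sin (α / 2)) • pt (Real.cos θ) (Real.sin θ) =
    (1 / Real.sin (α / 2) + (d / Real.sin α) * Real.cos θ) •
      pt (Real.cos θ) (Real.sin θ) :=
  limacon_odd_topology_general α d θ
end

section
/- Let θ : ℝ → ℝ be twice differentiable, let n(t) = (cos θ(t), sin θ(t)) be a point moving on the unit circle centred at the origin of ℝ², and let p : ℝ → ℝ² be twice differentiable with second derivative p″(t₀) = 0 at the point t₀ (a linear perturbation of the endpoint). Set x(t) = p(t) − n(t) and assume that for all t the tangency condition x(t) = ‖x(t)‖ • (−sin θ(t), cos θ(t)) holds with x(t) ≠ 0. Then the length function L(t) = θ(t) + ‖x(t)‖ of the CS-curve is twice differentiable at t₀ and its second variation equals L″(t₀) = ⟪p′(t₀), x̂′(t₀)⟫, where x̂(t) = x(t)/‖x(t)‖ denotes the outward pointing unit vector along the straight segment. -/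
open Real
open scoped InnerProductSpace

section UnitDirection

variable {E : Type*} [NormedAddCommGroup E] [InnerProductSpace ℝ E] {x u v : E}

lemma norm_eq_inner_of_eq_norm_smul (hu : ‖u‖ = 1) (hx : x = ‖x‖ • u) : ‖x‖ = ⟪x, u⟫_ℝ := by
  calc ‖x‖ = ⟪‖x‖ • u, u⟫_ℝ := by rw [real_inner_smul_left, real_inner_self_eq_norm_sq, hu]; ring
    _ = ⟪x, u⟫_ℝ := by rw [← hx]

lemma inner_eq_zero_of_eq_norm_smul (huv : ⟪u, v⟫_ℝ = 0) (hx : x = ‖x‖ • u) :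
    ⟪x, v⟫_ℝ = 0 := by
  rw [hx, real_inner_smul_left, huv, mul_zero]

lemma inv_norm_smul_eq_of_eq_norm_smul (hx0 : x ≠ 0) (hx : x = ‖x‖ • u) : ‖x‖⁻¹ • x = u :=
  calc ‖x‖⁻¹ • x = ‖x‖⁻¹ • (‖x‖ • u) := congrArg _ hx
    _ = u := inv_smul_smul₀ (norm_ne_zero_iff.mpr hx0) u

end UnitDirection

lemma inner_pt (a b c d : ℝ) : ⟪pt a b, pt c d⟫_ℝ = a * c + b * d := by
  simp [pt, PiLp.inner_apply, Fin.sum_univ_two]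
  ring

lemma pt_eq_add (a b : ℝ) : pt a b = a • pt 1 0 + b • pt 0 1 := by
  ext i; fin_cases i <;> simp [pt]

lemma hasDerivAt_pt {f g : ℝ → ℝ} {f' g' t : ℝ} (hf : HasDerivAt f f' t)
    (hg : HasDerivAt g g' t) :
    HasDerivAt (fun s => pt (f s) (g s)) (pt f' g') t := by
  rw [funext fun s => pt_eq_add (f s) (g s), pt_eq_add f' g']
  exact (hf.smul_const _).add (hg.smul_const _)

noncomputable def circlePoint (φ : ℝ) : EuclideanSpace ℝ (Fin 2) := pt (cos φ) (sin φ)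

noncomputable def circleTangent (φ : ℝ) : EuclideanSpace ℝ (Fin 2) := pt (-sin φ) (cos φ)

lemma inner_circleTangent_circlePoint (φ : ℝ) : ⟪circleTangent φ, circlePoint φ⟫_ℝ = 0 := by
  rw [circleTangent, circlePoint, inner_pt]; ring

lemma norm_circleTangent (φ : ℝ) : ‖circleTangent φ‖ = 1 := by
  simp [circleTangent, pt, EuclideanSpace.norm_eq, Fin.sum_univ_two]

lemma hasDerivAt_circlePoint (φ : ℝ) : HasDerivAt circlePoint (circleTangent φ) φ :=
  hasDerivAt_pt (hasDerivAt_cos φ) (hasDerivAt_sin φ)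

lemma hasDerivAt_circleTangent (φ : ℝ) : HasDerivAt circleTangent (-circlePoint φ) φ := by
  have h := hasDerivAt_pt (hasDerivAt_sin φ).neg (hasDerivAt_cos φ)
  rwa [show pt (-cos φ) (-sin φ) = -circlePoint φ by ext i; fin_cases i <;> simp [circlePoint, pt]]
    at h

lemma hasDerivAt_CS_length {θ : ℝ → ℝ} {p : ℝ → EuclideanSpace ℝ (Fin 2)} {θ' t : ℝ}
    {p' : EuclideanSpace ℝ (Fin 2)} (hθ : HasDerivAt θ θ' t) (hp : HasDerivAt p p' t)
    (htan : ∀ s, p s - circlePoint (θ s) = ‖p s - circlePoint (θ s)‖ • circleTangent (θ s)) :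
    HasDerivAt (fun s => θ s + ‖p s - circlePoint (θ s)‖) ⟪p', circleTangent (θ t)⟫_ℝ t := by
  have hlen : (fun s => θ s + ‖p s - circlePoint (θ s)‖) =
      fun s => θ s + ⟪p s - circlePoint (θ s), circleTangent (θ s)⟫_ℝ :=
    funext fun s => by rw [norm_eq_inner_of_eq_norm_smul (norm_circleTangent _) (htan s)]
  have hn := (hasDerivAt_circlePoint (θ t)).scomp t hθ
  have hτ := (hasDerivAt_circleTangent (θ t)).scomp t hθ
  have hx_perp : ⟪p t - circlePoint (θ t), circlePoint (θ t)⟫_ℝ = 0 :=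
    inner_eq_zero_of_eq_norm_smul (inner_circleTangent_circlePoint _) (htan t)
  rw [hlen]
  refine (hθ.add ((hp.sub hn).inner ℝ hτ)).congr_deriv ?_
  simp only [Pi.sub_apply, Function.comp_apply, inner_sub_left, inner_smul_left, inner_smul_right,
    inner_neg_right, hx_perp, real_inner_self_eq_norm_sq, norm_circleTangent, conj_trivial]
  ring

theorem second_variation_CS_curve_general
    (θ : ℝ → ℝ) (p : ℝ → EuclideanSpace ℝ (Fin 2)) (t₀ : ℝ)
    (hθ : Differentiable ℝ θ)
    (hp : Differentiable ℝ p) (hp' : Differentiable ℝ (deriv p))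
    (hp'' : deriv (deriv p) t₀ = 0)
    (htan : ∀ t : ℝ,
      p t - pt (Real.cos (θ t)) (Real.sin (θ t)) =
        ‖p t - pt (Real.cos (θ t)) (Real.sin (θ t))‖ •
          pt (-Real.sin (θ t)) (Real.cos (θ t)))
    (hne : ∀ t : ℝ, p t - pt (Real.cos (θ t)) (Real.sin (θ t)) ≠ 0) :
    DifferentiableAt ℝ
      (fun t => θ t + ‖p t - pt (Real.cos (θ t)) (Real.sin (θ t))‖) t₀ ∧
    DifferentiableAt ℝ
      (deriv (fun t => θ t + ‖p t - pt (Real.cos (θ t)) (Real.sin (θ t))‖)) t₀ ∧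
    deriv (deriv (fun t => θ t + ‖p t - pt (Real.cos (θ t)) (Real.sin (θ t))‖)) t₀ =
      ⟪deriv p t₀,
        deriv (fun t => ‖p t - pt (Real.cos (θ t)) (Real.sin (θ t))‖⁻¹ •
          (p t - pt (Real.cos (θ t)) (Real.sin (θ t)))) t₀⟫_ℝ := by
  have hn : ∀ φ, pt (cos φ) (sin φ) = circlePoint φ := fun _ => rfl
  have hτ : ∀ φ, pt (-sin φ) (cos φ) = circleTangent φ := fun _ => rfl
  simp only [hn, hτ] at htan hne ⊢
  have hL : ∀ t, HasDerivAt (fun s => θ s + ‖p s - circlePoint (θ s)‖)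
      ⟪deriv p t, circleTangent (θ t)⟫_ℝ t :=
    fun t => hasDerivAt_CS_length (hθ t).hasDerivAt (hp t).hasDerivAt htan
  have hL' : deriv (fun s => θ s + ‖p s - circlePoint (θ s)‖) =
      fun t => ⟪deriv p t, circleTangent (θ t)⟫_ℝ :=
    funext fun t => (hL t).deriv
  have hτ' := (hasDerivAt_circleTangent (θ t₀)).scomp t₀ (hθ t₀).hasDerivAt
  have hL'' : HasDerivAt (fun t => ⟪deriv p t, circleTangent (θ t)⟫_ℝ)
      ⟪deriv p t₀, deriv θ t₀ • -circlePoint (θ t₀)⟫_ℝ t₀ := by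
    simpa [hp''] using (hp' t₀).hasDerivAt.inner ℝ hτ'
  have hxhat : (fun t => ‖p t - circlePoint (θ t)‖⁻¹ • (p t - circlePoint (θ t))) =
      circleTangent ∘ θ :=
    funext fun t => inv_norm_smul_eq_of_eq_norm_smul (hne t) (htan t)
  refine ⟨(hL t₀).differentiableAt, hL' ▸ hL''.differentiableAt, ?_⟩
  rw [hL', hL''.deriv, hxhat, hτ'.deriv]

/-- **Second variation of length of a CS-curve** (Section 4).
`θ t` is the arc angle, `n t = (cos θ t, sin θ t)` the junction point on the unit circle,
`p t` the moving endpoint with `p″(t₀) = 0` (a linear perturbation), and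
`x t = p t - n t` the straight segment, tangent to the circle. Then the length
`L t = θ t + ‖x t‖` is twice differentiable at `t₀` with
`L″(t₀) = ⟪p′(t₀), x̂′(t₀)⟫`, where `x̂ = x/‖x‖`. -/
theorem second_variation_CS_curve
    (θ : ℝ → ℝ) (p : ℝ → EuclideanSpace ℝ (Fin 2)) (t₀ : ℝ)
    (hθ : Differentiable ℝ θ) (hθ' : Differentiable ℝ (deriv θ))
    (hp : Differentiable ℝ p) (hp' : Differentiable ℝ (deriv p))
    (hp'' : deriv (deriv p) t₀ = 0)
    (htan : ∀ t : ℝ,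
      p t - pt (Real.cos (θ t)) (Real.sin (θ t)) =
        ‖p t - pt (Real.cos (θ t)) (Real.sin (θ t))‖ •
          pt (-Real.sin (θ t)) (Real.cos (θ t)))
    (hne : ∀ t : ℝ, p t - pt (Real.cos (θ t)) (Real.sin (θ t)) ≠ 0) :
    DifferentiableAt ℝ
      (fun t => θ t + ‖p t - pt (Real.cos (θ t)) (Real.sin (θ t))‖) t₀ ∧
    DifferentiableAt ℝ
      (deriv (fun t => θ t + ‖p t - pt (Real.cos (θ t)) (Real.sin (θ t))‖)) t₀ ∧
    deriv (deriv (fun t => θ t + ‖p t - pt (Real.cos (θ t)) (Real.sin (θ t))‖)) t₀ =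
      ⟪deriv p t₀,
        deriv (fun t => ‖p t - pt (Real.cos (θ t)) (Real.sin (θ t))‖⁻¹ •
          (p t - pt (Real.cos (θ t)) (Real.sin (θ t)))) t₀⟫_ℝ :=
  second_variation_CS_curve_general θ p t₀ hθ hp hp' hp'' htan hne
end
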